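/- For the multi-space problem, rad(K_w) ≤ 2·rad(K_0) for every w ∈ W such that K_w is nonempty, where K_w := { u ∈ H : P_W u = w and dist(u,V_j) ≤ ε_j for all j = 0,…,n }. -/

import Mathlib

/-!
Fix `u₀ ∈ K_w`. The map `u ↦ (u - u₀) / 2` sends `K_w` into `K_0`: `P_W` is linear, and the
distance to a subspace is the quotient seminorm, so `dist((u - u₀) / 2, V_j) ≤ (ε_j + ε_j) / 2`.
Hence `K_w ⊆ u₀ + 2 • K_0`, and the Chebyshev radius of the image of `K_0` under this `2`-Lipschitz
map is at most `2 rad(K_0)`. Boundedness of `K_0`, needed for `rad` to be meaningful, comes from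
`V_0 = 0`.
-/

/-- The Chebyshev radius of a set: the infimum of radii of closed balls containing it. -/
noncomputable def chebRadius {H : Type*} [NormedAddCommGroup H] (S : Set H) : ℝ :=
  sInf {r : ℝ | ∃ v : H, S ⊆ Metric.closedBall v r}

/-- The multi-space set `K_w = {u : P_W u = w, dist(u, V_j) ≤ ε_j for j = 0,…,n}`. -/
def multiKw {H : Type*} [NormedAddCommGroup H] [InnerProductSpace ℝ H] {n : ℕ}
    (W : Submodule ℝ H) [W.HasOrthogonalProjection]
    (V : Fin (n + 1) → Submodule ℝ H) (ε : Fin (n + 1) → ℝ) (w : H) : Set H :=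
  {u : H | (W.orthogonalProjectionOnto u : H) = w ∧
    ∀ j : Fin (n + 1), Metric.infDist u (V j : Set H) ≤ ε j}

open Metric Set

section ChebRadius

variable {E F : Type*} [NormedAddCommGroup E] [NormedAddCommGroup F]

-- Every radius, negative ones included, is admissible for `∅`, so this is the junk value of `sInf`.
theorem chebRadius_empty : chebRadius (∅ : Set E) = 0 := by
  refine Real.sInf_of_not_bddBelow (not_bddBelow_iff.2 fun b => ?_)
  exact ⟨b - 1, ⟨0, empty_subset _⟩, by linarith⟩

theorem chebRadius_nonneg (S : Set E) : 0 ≤ chebRadius S := by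
  rcases S.eq_empty_or_nonempty with rfl | ⟨x, hx⟩
  · exact chebRadius_empty.ge
  · exact Real.sInf_nonneg fun r ⟨v, hv⟩ => dist_nonneg.trans (hv hx)

theorem chebRadius_le_of_subset_closedBall {S : Set E} (hS : S.Nonempty) {v : E} {r : ℝ}
    (hv : S ⊆ closedBall v r) : chebRadius S ≤ r := by
  obtain ⟨x, hx⟩ := hS
  exact csInf_le ⟨0, fun r' ⟨v', hv'⟩ => dist_nonneg.trans (hv' hx)⟩ ⟨v, hv⟩

theorem exists_subset_closedBall_of_isBounded {S : Set E} (hS : Bornology.IsBounded S) :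
    {r : ℝ | ∃ v : E, S ⊆ closedBall v r}.Nonempty :=
  let ⟨r, hr⟩ := (isBounded_iff_subset_closedBall 0).1 hS
  ⟨r, 0, hr⟩

theorem chebRadius_mono {S T : Set E} (hST : S ⊆ T) (hT : Bornology.IsBounded T) :
    chebRadius S ≤ chebRadius T := by
  rcases S.eq_empty_or_nonempty with rfl | hS
  · exact chebRadius_empty.trans_le (chebRadius_nonneg T)
  · exact le_csInf (exists_subset_closedBall_of_isBounded hT) fun r ⟨v, hv⟩ =>
      chebRadius_le_of_subset_closedBall hS (hST.trans hv)

theorem chebRadius_image_le {K : NNReal} {f : E → F} (hf : LipschitzWith K f) {S : Set E}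
    (hS : Bornology.IsBounded S) : chebRadius (f '' S) ≤ K * chebRadius S := by
  rcases S.eq_empty_or_nonempty with rfl | hne
  · simp [chebRadius_empty]
  rw [chebRadius, ← smul_eq_mul, chebRadius, ← Real.sInf_smul_of_nonneg K.coe_nonneg]
  refine le_csInf ((exists_subset_closedBall_of_isBounded hS).smul_set) ?_
  rintro _ ⟨r, ⟨v, hv⟩, rfl⟩
  refine chebRadius_le_of_subset_closedBall (hne.image f) (v := f v) ?_
  rintro _ ⟨x, hx, rfl⟩
  exact mem_closedBall.2 (hf.dist_le_mul x v |>.trans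
    (mul_le_mul_of_nonneg_left (mem_closedBall.1 (hv hx)) K.coe_nonneg))

end ChebRadius

theorem infDist_smul_sub_le {𝕜 E : Type*} [NormedField 𝕜] [SeminormedAddCommGroup E]
    [NormedSpace 𝕜 E] (V : Submodule 𝕜 E) (c : 𝕜) (x y : E) :
    infDist (c • (x - y)) V ≤ ‖c‖ * (infDist x V + infDist y V) := by
  have hnorm : ∀ z : E, infDist z V = ‖(Submodule.Quotient.mk z : E ⧸ V)‖ :=
    fun z => (QuotientAddGroup.norm_mk (S := V.toAddSubgroup) z).symm
  simp only [hnorm, Submodule.Quotient.mk_smul, Submodule.Quotient.mk_sub, norm_smul]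
  exact mul_le_mul_of_nonneg_left (norm_sub_le _ _) (norm_nonneg c)

section MultiSpace

variable {H : Type*} [NormedAddCommGroup H] [InnerProductSpace ℝ H] {n : ℕ}
  {W : Submodule ℝ H} [W.HasOrthogonalProjection]
  {V : Fin (n + 1) → Submodule ℝ H} {ε : Fin (n + 1) → ℝ}

theorem isBounded_multiKw (hV : V 0 = ⊥) (w : H) : Bornology.IsBounded (multiKw W V ε w) := by
  refine (isBounded_iff_subset_closedBall 0).2 ⟨ε 0, fun u hu => ?_⟩
  simpa [hV] using hu.2 0

theorem half_sub_mem_multiKw_zero {w u u₀ : H} (hu : u ∈ multiKw W V ε w)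
    (hu₀ : u₀ ∈ multiKw W V ε w) : (2 : ℝ)⁻¹ • (u - u₀) ∈ multiKw W V ε 0 := by
  refine ⟨by simp [hu.1, hu₀.1], fun j => ?_⟩
  calc infDist ((2 : ℝ)⁻¹ • (u - u₀)) (V j)
      ≤ ‖(2 : ℝ)⁻¹‖ * (infDist u (V j) + infDist u₀ (V j)) := infDist_smul_sub_le _ _ _ _
    _ ≤ ‖(2 : ℝ)⁻¹‖ * (ε j + ε j) := by gcongr; exacts [hu.2 j, hu₀.2 j]
    _ = ε j := by norm_num; ring

theorem exists_multiKw_subset_image_multiKw_zero (w : H) :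
    ∃ a : H, multiKw W V ε w ⊆ (fun x => a + (2 : ℝ) • x) '' multiKw W V ε 0 := by
  rcases (multiKw W V ε w).eq_empty_or_nonempty with hempty | ⟨u₀, hu₀⟩
  · exact ⟨0, hempty ▸ empty_subset _⟩
  refine ⟨u₀, fun u hu => ⟨_, half_sub_mem_multiKw_zero hu hu₀, ?_⟩⟩
  simp [smul_inv_smul₀ (two_ne_zero : (2 : ℝ) ≠ 0)]

end MultiSpace

theorem stmt17_general {H : Type*} [NormedAddCommGroup H] [InnerProductSpace ℝ H]
    (n : ℕ) (V : Fin (n + 1) → Submodule ℝ H) [∀ j, FiniteDimensional ℝ (V j)]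
    (hdim : ∀ j : Fin (n + 1), Module.finrank ℝ (V j) = (j : ℕ))
    (W : Submodule ℝ H) [FiniteDimensional ℝ W]
    (ε : Fin (n + 1) → ℝ)
    (w : H) :
    chebRadius (multiKw W V ε w) ≤ 2 * chebRadius (multiKw W V ε 0) := by
  have hV : V 0 = ⊥ := Submodule.finrank_eq_zero.1 (hdim 0)
  obtain ⟨a, hsub⟩ := exists_multiKw_subset_image_multiKw_zero (W := W) (ε := ε) w
  have hlip : LipschitzWith 2 fun x : H => a + (2 : ℝ) • x :=
    LipschitzWith.of_dist_le_mul fun x y => by simp [dist_eq_norm, ← smul_sub, norm_smul]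
  calc chebRadius (multiKw W V ε w)
      ≤ chebRadius ((fun x => a + (2 : ℝ) • x) '' multiKw W V ε 0) :=
        chebRadius_mono hsub (hlip.isBounded_image (isBounded_multiKw hV 0))
    _ ≤ 2 * chebRadius (multiKw W V ε 0) := by
        exact_mod_cast chebRadius_image_le hlip (isBounded_multiKw hV 0)

/-- For the multi-space problem, `rad(K_w) ≤ 2·rad(K_0)` for every `w ∈ W` with `K_w ≠ ∅`. -/
theorem stmt17 {H : Type*} [NormedAddCommGroup H] [InnerProductSpace ℝ H] [CompleteSpace H]
    (n : ℕ) (V : Fin (n + 1) → Submodule ℝ H) [∀ j, FiniteDimensional ℝ (V j)]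
    (hmono : ∀ i j : Fin (n + 1), i ≤ j → V i ≤ V j)
    (hdim : ∀ j : Fin (n + 1), Module.finrank ℝ (V j) = (j : ℕ))
    (W : Submodule ℝ H) [FiniteDimensional ℝ W]
    (ε : Fin (n + 1) → ℝ) (hε : ∀ j, 0 < ε j)
    (hanti : ∀ i j : Fin (n + 1), i ≤ j → ε j ≤ ε i)
    (w : H) (hw : w ∈ W) (hne : (multiKw W V ε w).Nonempty) :
    chebRadius (multiKw W V ε w) ≤ 2 * chebRadius (multiKw W V ε 0) :=
  stmt17_general n V hdim W ε w
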